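/- Let U ⊆ ℂⁿ be open, let r : U → ℝ be of class C² with L_r(z;X) > 0 for every z ∈ U and every nonzero X ∈ ℂⁿ, and let K ⊆ U be compact. Then there exist constants C > 0 and λ > 0 such that for every ζ ∈ K and every z ∈ ℂⁿ with ‖z−ζ‖ < λ one has z ∈ U and r(z) ≥ r(ζ) − 2 Re P_r(z;ζ) + C‖z−ζ‖². -/

import Mathlib

/-! The Levi polynomial is built so that `r ζ - 2 Re P_r(z;ζ) + Re L_r(ζ; z - ζ)` is exactly the
second-order Taylor polynomial of `r` at `ζ`. Hence `r z - (r ζ - 2 Re P_r(z;ζ))` is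
`Re L_r(ζ; z - ζ)` up to the Taylor remainder. By compactness the Levi form is bounded below by
`m ‖X‖²` uniformly on `K`, and by uniform continuity of the Hessian near `K` the remainder is at
most `(m / 2) ‖z - ζ‖²` once `‖z - ζ‖` is small, so `C = m / 2` works. -/

open Complex Metric Set Function

noncomputable section

/-- Directional Wirtinger derivative `∂_v f(z) = (1/2)(Df(z)v − i·Df(z)(i·v))`.
For `v = e_j` this is the Wirtinger derivative `∂f/∂z_j(z)`; in coordinates
`∂_v = Σ_j v_j ∂/∂z_j`. -/
def wDeriv {F : Type*} [NormedAddCommGroup F] [NormedSpace ℂ F]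
    (f : F → ℂ) (v : F) (z : F) : ℂ :=
  (1 / 2) * (fderiv ℝ f z v - Complex.I * fderiv ℝ f z (Complex.I • v))

/-- Directional conjugate Wirtinger derivative `∂̄_v f(z) = (1/2)(Df(z)v + i·Df(z)(i·v))`;
in coordinates `∂̄_v = Σ_k (conj v_k) ∂/∂z̄_k`. -/
def wDerivBar {F : Type*} [NormedAddCommGroup F] [NormedSpace ℂ F]
    (f : F → ℂ) (v : F) (z : F) : ℂ :=
  (1 / 2) * (fderiv ℝ f z v + Complex.I * fderiv ℝ f z (Complex.I • v))

/-- The Levi form `L_r(z;X) = Σ_{j,k} ∂²r/∂z_j∂z̄_k(z) X_j (conj X_k)` of a real-valued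
function, written via directional Wirtinger derivatives. -/
def leviForm {F : Type*} [NormedAddCommGroup F] [NormedSpace ℂ F]
    (r : F → ℝ) (z X : F) : ℂ :=
  wDerivBar (fun w => wDeriv (fun y => (r y : ℂ)) X w) X z

/-- The Levi polynomial
`P_r(z;ζ) = −Σ_j ∂r/∂z_j(ζ)(z_j−ζ_j) − (1/2) Σ_{i,j} ∂²r/∂z_i∂z_j(ζ)(z_i−ζ_i)(z_j−ζ_j)`. -/
def leviPolynomial {F : Type*} [NormedAddCommGroup F] [NormedSpace ℂ F]
    (r : F → ℝ) (ζ z : F) : ℂ :=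
  - wDeriv (fun y => (r y : ℂ)) (z - ζ) ζ
  - (1 / 2) * wDeriv (fun w => wDeriv (fun y => (r y : ℂ)) (z - ζ) w) (z - ζ) ζ

open Filter Topology

theorem IsCompact.exists_pos_mul_sq_le {X F : Type*} [TopologicalSpace X] [NormedAddCommGroup F]
    [NormedSpace ℝ F] [ProperSpace F] {K : Set X} (hK : IsCompact K) {q : X → F → ℝ}
    (hq : ContinuousOn (uncurry q) (K ×ˢ univ))
    (hsmul : ∀ x ∈ K, ∀ (c : ℝ) v, q x (c • v) = c ^ 2 * q x v)
    (hpos : ∀ x ∈ K, ∀ v, v ≠ 0 → 0 < q x v) :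
    ∃ m > 0, ∀ x ∈ K, ∀ v, m * ‖v‖ ^ 2 ≤ q x v := by
  obtain ⟨m, hm, hmS⟩ := (hK.prod (isCompact_sphere (0 : F) 1)).exists_forall_le'
    (hq.mono (prod_mono subset_rfl (subset_univ _)))
    fun p hp => hpos p.1 hp.1 p.2 (ne_zero_of_mem_unit_sphere ⟨p.2, hp.2⟩)
  refine ⟨m, hm, fun x hx v => ?_⟩
  rcases eq_or_ne v 0 with rfl | hv
  · simpa using (hsmul x hx 0 0).ge
  · have hu : ‖v‖⁻¹ • v ∈ sphere (0 : F) 1 := by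
      simp [norm_smul, inv_mul_cancel₀ (norm_ne_zero_iff.2 hv)]
    have hscale := hsmul x hx ‖v‖ (‖v‖⁻¹ • v)
    rw [smul_inv_smul₀ (norm_ne_zero_iff.2 hv)] at hscale
    rw [hscale, mul_comm]
    gcongr
    exact hmS (x, _) ⟨hx, hu⟩

section Taylor

variable {E : Type*} [NormedAddCommGroup E] [NormedSpace ℝ E] {r : E → ℝ}

theorem abs_sub_taylor_two_le {ζ z : E} {ε : ℝ}
    (hr : ∀ w ∈ closedBall ζ ‖z - ζ‖, ContDiffAt ℝ 2 r w)
    (hε : ∀ w ∈ closedBall ζ ‖z - ζ‖,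
      ‖fderiv ℝ (fderiv ℝ r) w - fderiv ℝ (fderiv ℝ r) ζ‖ ≤ ε) :
    |r z - r ζ - fderiv ℝ r ζ (z - ζ) - (1 / 2) * fderiv ℝ (fderiv ℝ r) ζ (z - ζ) (z - ζ)|
      ≤ ε * ‖z - ζ‖ ^ 2 := by
  set s := closedBall ζ ‖z - ζ‖
  set B := fderiv ℝ (fderiv ℝ r) ζ
  have hζs : ζ ∈ s := mem_closedBall_self (norm_nonneg _)
  have hzs : z ∈ s := by simp [s, dist_eq_norm]
  have hdr : ∀ w ∈ s, HasFDerivAt r (fderiv ℝ r w) w := fun w hw =>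
    ((hr w hw).differentiableAt two_ne_zero).hasFDerivAt
  have hdr' : ∀ w ∈ s, DifferentiableAt ℝ (fderiv ℝ r) w := fun w hw =>
    ((hr w hw).fderiv_right (m := 1) le_rfl).differentiableAt one_ne_zero
  have hB : ∀ u v, B u v = B v u := (hr ζ hζs).isSymmSndFDerivAt (by simp)
  have hε₀ : 0 ≤ ε := le_trans (by positivity) (hε ζ hζs)
  have hfirst : ∀ w ∈ s, ‖fderiv ℝ r w - B (w - ζ) - fderiv ℝ r ζ‖ ≤ ε * ‖z - ζ‖ := by
    intro w hw
    have hwζ : ‖w - ζ‖ ≤ ‖z - ζ‖ := by simpa [s, dist_eq_norm] using hw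
    calc ‖fderiv ℝ r w - B (w - ζ) - fderiv ℝ r ζ‖
        = ‖fderiv ℝ r w - fderiv ℝ r ζ - B (w - ζ)‖ := by congr 1; abel
      _ ≤ ε * ‖w - ζ‖ :=
        (convex_closedBall ζ _).norm_image_sub_le_of_norm_fderiv_le' hdr' hε hζs hw
      _ ≤ ε * ‖z - ζ‖ := by gcongr
  -- `B` is symmetric, so `w ↦ (1 / 2) * B (w - ζ) (w - ζ)` has derivative `B (w - ζ)`.
  have hquad : ∀ w ∈ s, HasFDerivWithinAt (fun w => r w - (1 / 2) * B (w - ζ) (w - ζ))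
      (fderiv ℝ r w - B (w - ζ)) s w := by
    intro w hw
    have hsub : HasFDerivAt (fun w : E => w - ζ) (ContinuousLinearMap.id ℝ E) w :=
      (hasFDerivAt_id w).sub_const ζ
    have hQ := ((B.hasFDerivAt.comp w hsub).clm_apply hsub).const_mul (1 / 2 : ℝ)
    refine ((hdr w hw).sub hQ).hasFDerivWithinAt.congr_fderiv
      (ContinuousLinearMap.ext fun u => ?_)
    simp only [sub_apply, smul_apply, add_apply, ContinuousLinearMap.comp_apply, comp_apply,
      ContinuousLinearMap.flip_apply, ContinuousLinearMap.id_apply, smul_eq_mul]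
    rw [hB u (w - ζ)]
    ring
  have hmvt := (convex_closedBall ζ _).norm_image_sub_le_of_norm_hasFDerivWithin_le'
    hquad hfirst hζs hzs
  rw [Real.norm_eq_abs] at hmvt
  convert hmvt using 1
  · simp only [sub_self, map_zero, mul_zero, sub_zero]
    ring_nf
  · ring

theorem IsCompact.exists_forall_abs_sub_taylor_two_le {U K : Set E} (hU : IsOpen U)
    (hr : ContDiffOn ℝ 2 r U) (hK : IsCompact K) (hKU : K ⊆ U) {ε : ℝ} (hε : 0 < ε) :
    ∃ δ > 0, ∀ ζ ∈ K, ∀ z, ‖z - ζ‖ < δ → z ∈ U ∧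
      |r z - r ζ - fderiv ℝ r ζ (z - ζ) - (1 / 2) * fderiv ℝ (fderiv ℝ r) ζ (z - ζ) (z - ζ)|
        ≤ ε * ‖z - ζ‖ ^ 2 := by
  obtain ⟨δ₀, hδ₀, hδ₀U⟩ := hK.exists_thickening_subset_open hU hKU
  have hcont : ∀ w ∈ K, ContinuousAt (fderiv ℝ (fderiv ℝ r)) w := fun w hw =>
    (((hr.contDiffAt (hU.mem_nhds (hKU hw))).fderiv_right (m := 1) le_rfl).fderiv_right
      (m := 0) le_rfl).continuousAt
  obtain ⟨δ₁, hδ₁, hδ₁ε⟩ := Metric.mem_uniformity_dist.1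
    (hK.uniformContinuousAt_of_continuousAt _ hcont
      (Metric.dist_mem_uniformity (α := E →L[ℝ] E →L[ℝ] ℝ) hε))
  refine ⟨min δ₀ δ₁, by positivity, fun ζ hζ z hz => ?_⟩
  have hball : ∀ w ∈ closedBall ζ ‖z - ζ‖, w ∈ U ∧
      ‖fderiv ℝ (fderiv ℝ r) w - fderiv ℝ (fderiv ℝ r) ζ‖ ≤ ε := by
    intro w hw
    have hwζ : dist w ζ < min δ₀ δ₁ := lt_of_le_of_lt (by simpa using hw) hz
    refine ⟨hδ₀U (mem_thickening_iff.2 ⟨ζ, hζ, hwζ.trans_le (min_le_left _ _)⟩), ?_⟩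
    have hdist : dist (fderiv ℝ (fderiv ℝ r) ζ) (fderiv ℝ (fderiv ℝ r) w) < ε :=
      hδ₁ε (by rw [dist_comm]; exact hwζ.trans_le (min_le_right _ _)) hζ
    have hnorm := dist_eq_norm (fderiv ℝ (fderiv ℝ r) ζ) (fderiv ℝ (fderiv ℝ r) w)
    exact (norm_sub_rev (fderiv ℝ (fderiv ℝ r) w) _).trans_le (hnorm ▸ hdist.le)
  refine ⟨(hball z (by simp [dist_eq_norm])).1, abs_sub_taylor_two_le
    (fun w hw => hr.contDiffAt (hU.mem_nhds (hball w hw).1)) fun w hw => (hball w hw).2⟩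

end Taylor

section Levi

variable {E : Type*} [NormedAddCommGroup E] [NormedSpace ℂ E] {r : E → ℝ}

theorem wDeriv_ofReal {z : E} (hr : DifferentiableAt ℝ r z) (v : E) :
    wDeriv (fun y => (r y : ℂ)) v z
      = (1 / 2) * ((fderiv ℝ r z v : ℂ) - I * (fderiv ℝ r z (I • v) : ℂ)) := by
  have h : HasFDerivAt (fun y => (r y : ℂ)) (ofRealCLM.comp (fderiv ℝ r z)) z :=
    ofRealCLM.hasFDerivAt.comp z hr.hasFDerivAt
  rw [wDeriv, h.fderiv]
  rfl

theorem fderiv_wDeriv_ofReal_apply {z : E} (hr : ContDiffAt ℝ 2 r z) (v u : E) :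
    fderiv ℝ (fun w => wDeriv (fun y => (r y : ℂ)) v w) z u
      = (1 / 2) * ((fderiv ℝ (fderiv ℝ r) z u v : ℂ)
          - I * (fderiv ℝ (fderiv ℝ r) z u (I • v) : ℂ)) := by
  have hD : HasFDerivAt (fderiv ℝ r) (fderiv ℝ (fderiv ℝ r) z) z :=
    ((hr.fderiv_right (m := 1) le_rfl).differentiableAt one_ne_zero).hasFDerivAt
  have hev : (fun w => wDeriv (fun y => (r y : ℂ)) v w) =ᶠ[𝓝 z]
      fun w => (1 / 2) * ((fderiv ℝ r w v : ℂ) - I * (fderiv ℝ r w (I • v) : ℂ)) := by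
    filter_upwards [hr.eventually (by simp)] with w hw
    exact wDeriv_ofReal (hw.differentiableAt two_ne_zero) v
  have h₁ := ofRealCLM.hasFDerivAt.comp z (hD.clm_apply (hasFDerivAt_const v z))
  have h₂ := ofRealCLM.hasFDerivAt.comp z (hD.clm_apply (hasFDerivAt_const (I • v) z))
  have h : HasFDerivAt
      (fun w => (1 / 2 : ℂ) * ((fderiv ℝ r w v : ℂ) - I * (fderiv ℝ r w (I • v) : ℂ))) _ z :=
    (h₁.sub (h₂.const_mul I)).const_mul (1 / 2 : ℂ)
  rw [hev.fderiv_eq, h.fderiv]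
  simp

theorem re_leviForm {z : E} (hr : ContDiffAt ℝ 2 r z) (X : E) :
    (leviForm r z X).re
      = (1 / 4) * (fderiv ℝ (fderiv ℝ r) z X X
          + fderiv ℝ (fderiv ℝ r) z (I • X) (I • X)) := by
  rw [leviForm, wDerivBar, fderiv_wDeriv_ofReal_apply hr, fderiv_wDeriv_ofReal_apply hr]
  simp only [mul_re, mul_im, sub_re, sub_im, add_re, add_im, ofReal_re, ofReal_im, I_re, I_im,
    div_ofNat_re, div_ofNat_im, one_re, one_im]
  ring

theorem sub_two_mul_re_leviPolynomial_add_re_leviForm {ζ : E} (hr : ContDiffAt ℝ 2 r ζ)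
    (z : E) :
    r ζ - 2 * (leviPolynomial r ζ z).re + (leviForm r ζ (z - ζ)).re
      = r ζ + fderiv ℝ r ζ (z - ζ) + (1 / 2) * fderiv ℝ (fderiv ℝ r) ζ (z - ζ) (z - ζ) := by
  rw [re_leviForm hr, leviPolynomial, wDeriv_ofReal (hr.differentiableAt two_ne_zero), wDeriv,
    fderiv_wDeriv_ofReal_apply hr, fderiv_wDeriv_ofReal_apply hr]
  simp only [mul_re, mul_im, sub_re, sub_im, neg_re, ofReal_re, ofReal_im,
    I_re, I_im, div_ofNat_re, div_ofNat_im, one_re, one_im, map_sub, ofReal_sub, sub_apply]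
  ring

theorem exists_pos_mul_sq_le_re_leviForm [ProperSpace E] {U K : Set E} (hU : IsOpen U)
    (hr : ContDiffOn ℝ 2 r U)
    (hLevi : ∀ z ∈ U, ∀ X, X ≠ 0 → 0 < (leviForm r z X).re) (hK : IsCompact K) (hKU : K ⊆ U) :
    ∃ m > 0, ∀ ζ ∈ K, ∀ X, m * ‖X‖ ^ 2 ≤ (leviForm r ζ X).re := by
  have hr₂ : ∀ z ∈ K, ContDiffAt ℝ 2 r z := fun z hz => hr.contDiffAt (hU.mem_nhds (hKU hz))
  have hD : ContinuousOn (fun p : E × E => fderiv ℝ (fderiv ℝ r) p.1) (K ×ˢ univ) :=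
    (((hr.fderiv_of_isOpen hU (m := 1) le_rfl).continuousOn_fderiv_of_isOpen hU le_rfl).mono
      hKU).comp continuousOn_fst fun p hp => hp.1
  refine hK.exists_pos_mul_sq_le ?_ (fun ζ hζ c X => ?_) fun ζ hζ => hLevi ζ (hKU hζ)
  · refine ContinuousOn.congr (f := fun p : E × E => (1 / 4 : ℝ) *
      (fderiv ℝ (fderiv ℝ r) p.1 p.2 p.2 + fderiv ℝ (fderiv ℝ r) p.1 (I • p.2) (I • p.2))) ?_
      fun p hp => re_leviForm (hr₂ p.1 hp.1) p.2
    exact continuousOn_const.mul (((hD.clm_apply continuousOn_snd).clm_apply continuousOn_snd).add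
      ((hD.clm_apply (continuousOn_snd.const_smul I)).clm_apply (continuousOn_snd.const_smul I)))
  · rw [re_leviForm (hr₂ ζ hζ), re_leviForm (hr₂ ζ hζ), smul_comm I c X]
    simp only [map_smul, smul_apply, smul_eq_mul]
    ring

end Levi

/-- Let `U ⊆ ℂⁿ` be open, `r : U → ℝ` of class `C²` with everywhere
positive definite Levi form, and `K ⊆ U` compact. Then there are constants `C > 0` and
`λ > 0` such that for every `ζ ∈ K` and every `z` with `‖z − ζ‖ < λ` one has `z ∈ U` and
`r z ≥ r ζ − 2 Re P_r(z;ζ) + C ‖z−ζ‖²`. -/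
theorem statement_4 {n : ℕ} (U : Set (EuclideanSpace ℂ (Fin n))) (hU : IsOpen U)
    (r : EuclideanSpace ℂ (Fin n) → ℝ) (hr : ContDiffOn ℝ 2 r U)
    (hLevi : ∀ z ∈ U, ∀ X : EuclideanSpace ℂ (Fin n), X ≠ 0 → 0 < (leviForm r z X).re)
    (K : Set (EuclideanSpace ℂ (Fin n))) (hK : IsCompact K) (hKU : K ⊆ U) :
    ∃ C > (0 : ℝ), ∃ lam > (0 : ℝ), ∀ ζ ∈ K, ∀ z : EuclideanSpace ℂ (Fin n),
      ‖z - ζ‖ < lam →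
        z ∈ U ∧ r ζ - 2 * (leviPolynomial r ζ z).re + C * ‖z - ζ‖ ^ 2 ≤ r z := by
  obtain ⟨m, hm, hmK⟩ := exists_pos_mul_sq_le_re_leviForm hU hr hLevi hK hKU
  obtain ⟨δ, hδ, hδK⟩ := hK.exists_forall_abs_sub_taylor_two_le hU hr hKU (half_pos hm)
  refine ⟨m / 2, half_pos hm, δ, hδ, fun ζ hζ z hz => ?_⟩
  obtain ⟨hzU, htaylor⟩ := hδK ζ hζ z hz
  have hr₂ : ContDiffAt ℝ 2 r ζ := hr.contDiffAt (hU.mem_nhds (hKU hζ))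
  refine ⟨hzU, ?_⟩
  linarith [sub_two_mul_re_leviPolynomial_add_re_leviForm hr₂ z, hmK ζ hζ (z - ζ),
    (abs_le.1 htaylor).1]
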